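/- Let n ≥ 1, let V = ℝ^{4n} with its standard inner product and standard orthonormal basis (e_α), and let I₁, I₂, I₃ : V →ₗ[ℝ] V be skew-adjoint linear maps satisfying I_i ∘ I_i = -id (i = 1,2,3) and I₁ ∘ I₂ ∘ I₃ = -id. For α ∈ {1,…,4n} define the vector field X̃_α on V × ℝ³ by X̃_α(x, z) := (e_α, (2⟪I_i x, e_α⟫)_{i=1,2,3}). Then for every point q ∈ V × ℝ³, the real linear span of the vectors {X̃_α(q) : α} together with the Lie bracket values {[X̃_α, X̃_β](q) : α, β} is all of V × ℝ³. In other words, the horizontal distribution spanned by the X̃_α is bracket generating of step two. -/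

import Mathlib

/-!
The field `X̃_α` is the constant `(e_α, 0)` plus a linear map with values in the vertical `ℝ³`
that only sees the horizontal coordinate, so `[X̃_α, X̃_β] = (0, 4 (⟪Iᵢ e_α, e_β⟫)ᵢ)`: the bracket
of two such fields is constant and vertical. For a unit vector `e`, the quaternionic relations
make `I₁ e, I₂ e, I₃ e` orthonormal, so `v ↦ (⟪Iᵢ e, v⟫)ᵢ` maps `ℝ^{4n}` onto `ℝ³`; hence the
brackets `[X̃_α, X̃_β]` with `e_α = e` already span the vertical space, and subtracting vertical
parts from the `X̃_α` yields the horizontal one.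
-/

open RealInnerProductSpace

theorem quaternion_cyclic_mul {R : Type*} [Ring R] {a b c : R} (ha : a * a = -1)
    (hb : b * b = -1) (hc : c * c = -1) (h : a * (b * c) = -1) :
    a * b = c ∧ b * c = a ∧ c * a = b := by
  have hab : a * b = c := by
    calc a * b = -(a * b * (c * c)) := by rw [hc]; noncomm_ring
      _ = -(a * (b * c) * c) := by noncomm_ring
      _ = c := by rw [h]; noncomm_ring
  have hbc : b * c = a := by
    calc b * c = -(a * a * (b * c)) := by rw [ha]; noncomm_ring
      _ = -(a * (a * (b * c))) := by noncomm_ring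
      _ = a := by rw [h]; noncomm_ring
  refine ⟨hab, hbc, ?_⟩
  calc c * a = -(b * b * (c * a)) := by rw [hb]; noncomm_ring
    _ = -(b * (b * c * a)) := by noncomm_ring
    _ = b := by rw [hbc, ha]; noncomm_ring

section
variable {E : Type*} [NormedAddCommGroup E] [InnerProductSpace ℝ E]

theorem inner_apply_self_eq_zero_of_skew {A : E →ₗ[ℝ] E} (hA : ∀ v w, ⟪A v, w⟫ = -⟪v, A w⟫)
    (v : E) : ⟪A v, v⟫ = 0 := by
  linarith [hA v v, real_inner_comm v (A v)]

theorem inner_apply_eq_neg_inner_apply_of_skew {A : E →ₗ[ℝ] E}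
    (hA : ∀ v w, ⟪A v, w⟫ = -⟪v, A w⟫) (v w : E) : ⟪A v, w⟫ = -⟪A w, v⟫ := by
  rw [hA, real_inner_comm]

theorem inner_apply_apply_eq_zero_of_skew {A B C : Module.End ℝ E}
    (hA : ∀ v w, ⟪A v, w⟫ = -⟪v, A w⟫) (hC : ∀ v w, ⟪C v, w⟫ = -⟪v, C w⟫)
    (h : A * B = C) (v : E) : ⟪A v, B v⟫ = 0 := by
  rw [hA, ← Module.End.mul_apply, h, real_inner_comm, inner_apply_self_eq_zero_of_skew hC,
    neg_zero]

theorem norm_apply_of_skew_of_mul_self {A : Module.End ℝ E}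
    (hA : ∀ v w, ⟪A v, w⟫ = -⟪v, A w⟫) (hsq : A * A = -1) (v : E) : ‖A v‖ = ‖v‖ := by
  have : ‖A v‖ ^ 2 = ‖v‖ ^ 2 := by
    rw [← real_inner_self_eq_norm_sq, ← real_inner_self_eq_norm_sq, hA, ← Module.End.mul_apply,
      hsq]
    simp
  exact (sq_eq_sq₀ (norm_nonneg _) (norm_nonneg _)).1 this

theorem orthonormal_apply_of_quaternionic (I : Fin 3 → Module.End ℝ E)
    (hskew : ∀ i v w, ⟪I i v, w⟫ = -⟪v, I i w⟫) (hsq : ∀ i, I i * I i = -1)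
    (hcomm : I 0 * (I 1 * I 2) = -1) {e : E} (he : ‖e‖ = 1) :
    Orthonormal ℝ (fun i => I i e) := by
  obtain ⟨h01, h12, h20⟩ := quaternion_cyclic_mul (hsq 0) (hsq 1) (hsq 2) hcomm
  have o01 := inner_apply_apply_eq_zero_of_skew (hskew 0) (hskew 2) h01 e
  have o12 := inner_apply_apply_eq_zero_of_skew (hskew 1) (hskew 0) h12 e
  have o20 := inner_apply_apply_eq_zero_of_skew (hskew 2) (hskew 1) h20 e
  refine ⟨fun i => by rw [norm_apply_of_skew_of_mul_self (hskew i) (hsq i), he], ?_⟩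
  intro i j hij
  fin_cases i <;> fin_cases j <;>
    first | exact (hij rfl).elim | assumption | (rw [real_inner_comm]; assumption)

end

section
variable {ι E : Type*} [NormedAddCommGroup E] [InnerProductSpace ℝ E]

noncomputable def innerFamilyCLM [Fintype ι] (v : ι → E) : E →L[ℝ] EuclideanSpace ℝ ι :=
  (EuclideanSpace.equiv ι ℝ).symm.toContinuousLinearMap ∘L
    ContinuousLinearMap.pi (fun i => innerSL ℝ (v i))

@[simp]
theorem innerFamilyCLM_apply [Fintype ι] (v : ι → E) (x : E) :
    innerFamilyCLM v x = WithLp.toLp 2 (fun i => ⟪v i, x⟫) := rfl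

theorem Orthonormal.innerFamilyCLM_surjective [Fintype ι] {v : ι → E} (hv : Orthonormal ℝ v) :
    Function.Surjective (innerFamilyCLM v) := fun z =>
  ⟨∑ i, z i • v i, by ext i; exact hv.inner_right_fintype (fun j => z j) i⟩

end

theorem Submodule.span_range_comp_eq_top {R M N ι : Type*} [Semiring R] [AddCommMonoid M]
    [AddCommMonoid N] [Module R M] [Module R N] {b : ι → M} (hb : span R (Set.range b) = ⊤)
    {f : M →ₗ[R] N} (hf : Function.Surjective f) : span R (Set.range (f ∘ b)) = ⊤ := by
  rw [Set.range_comp, Submodule.span_image, hb, Submodule.map_top, LinearMap.range_eq_top.2 hf]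

theorem VectorField.lieBracket_const_prod_comp_fst {𝕜 V W : Type*} [NontriviallyNormedField 𝕜]
    [NormedAddCommGroup V] [NormedSpace 𝕜 V] [NormedAddCommGroup W] [NormedSpace 𝕜 W]
    (v w : V) (φ ψ : V →L[𝕜] W) (q : V × W) :
    lieBracket 𝕜 (fun p => (v, φ p.1)) (fun p => (w, ψ p.1)) q = (0, ψ v - φ w) := by
  have hd : ∀ (u : V) (χ : V →L[𝕜] W) p,
      fderiv 𝕜 (fun p : V × W => (u, χ p.1)) p = (0 : V × W →L[𝕜] V).prod (χ ∘L .fst 𝕜 V W) :=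
    fun u χ p => ((hasFDerivAt_const u p).prodMk (χ ∘L .fst 𝕜 V W).hasFDerivAt).fderiv
  simp [lieBracket_eq, hd]

theorem EuclideanSpace.span_range_single_one (𝕜 ι : Type*) [RCLike 𝕜] [Fintype ι]
    [DecidableEq ι] :
    Submodule.span 𝕜 (Set.range fun i : ι => EuclideanSpace.single i (1 : 𝕜)) = ⊤ := by
  rw [← (EuclideanSpace.basisFun ι 𝕜).toBasis.span_eq]
  congr
  ext i : 1
  simp

section
variable {ι E : Type*} [Fintype ι] [NormedAddCommGroup E] [InnerProductSpace ℝ E]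

def heisenbergField (I : ι → E →ₗ[ℝ] E) (y : E) :
    E × EuclideanSpace ℝ ι → E × EuclideanSpace ℝ ι :=
  fun p => (y, WithLp.toLp 2 (fun i => 2 * ⟪I i p.1, y⟫))

theorem heisenbergField_eq_const_prod_comp_fst {I : ι → E →ₗ[ℝ] E}
    (hskew : ∀ i v w, ⟪I i v, w⟫ = -⟪v, I i w⟫) (y : E) :
    heisenbergField I y = fun p => (y, ((-2 : ℝ) • innerFamilyCLM (fun i => I i y)) p.1) := by
  funext p
  ext i
  · rfl
  · simp [heisenbergField, inner_apply_eq_neg_inner_apply_of_skew (hskew i) p.1]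

theorem lieBracket_heisenbergField {I : ι → E →ₗ[ℝ] E}
    (hskew : ∀ i v w, ⟪I i v, w⟫ = -⟪v, I i w⟫) (x y : E) (q : E × EuclideanSpace ℝ ι) :
    VectorField.lieBracket ℝ (heisenbergField I x) (heisenbergField I y) q =
      (4 : ℝ) • (0, innerFamilyCLM (fun i => I i x) y) := by
  rw [heisenbergField_eq_const_prod_comp_fst hskew, heisenbergField_eq_const_prod_comp_fst hskew,
    VectorField.lieBracket_const_prod_comp_fst]
  ext i
  · simp
  · simp [inner_apply_eq_neg_inner_apply_of_skew (hskew i) y]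
    ring

end

open RealInnerProductSpace in
theorem horizontal_fields_bracket_generating
    (n : ℕ) (hn : 1 ≤ n)
    (I : Fin 3 → EuclideanSpace ℝ (Fin (4 * n)) →ₗ[ℝ] EuclideanSpace ℝ (Fin (4 * n)))
    (hskew : ∀ i : Fin 3, ∀ v w : EuclideanSpace ℝ (Fin (4 * n)),
      ⟪I i v, w⟫ = -⟪v, I i w⟫)
    (hsq : ∀ i : Fin 3, (I i) ∘ₗ (I i) = -LinearMap.id)
    (hcomm : (I 0) ∘ₗ (I 1) ∘ₗ (I 2) = -LinearMap.id)
    (X : Fin (4 * n) → (EuclideanSpace ℝ (Fin (4 * n)) × EuclideanSpace ℝ (Fin 3)) →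
      (EuclideanSpace ℝ (Fin (4 * n)) × EuclideanSpace ℝ (Fin 3)))
    (hX : ∀ α, ∀ p, X α p =
      (EuclideanSpace.single α 1,
        WithLp.toLp 2 (fun i : Fin 3 => 2 * ⟪I i p.1, EuclideanSpace.single α 1⟫))) :
    ∀ q : EuclideanSpace ℝ (Fin (4 * n)) × EuclideanSpace ℝ (Fin 3),
      Submodule.span ℝ
        ({v | ∃ α, v = X α q} ∪
          {v | ∃ α β, v = VectorField.lieBracket ℝ (X α) (X β) q}) = ⊤ := by
  intro q
  set S := Submodule.span ℝ
    ({v | ∃ α, v = X α q} ∪ {v | ∃ α β, v = VectorField.lieBracket ℝ (X α) (X β) q})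
  have hXfield : ∀ α, X α = heisenbergField I (EuclideanSpace.single α 1) := fun α =>
    funext (hX α)
  have hvert : ∀ z, ((0 : EuclideanSpace ℝ (Fin (4 * n))), z) ∈ S := by
    obtain ⟨α₀⟩ : Nonempty (Fin (4 * n)) := ⟨⟨0, by omega⟩⟩
    have hspan := Submodule.span_range_comp_eq_top (EuclideanSpace.span_range_single_one ℝ _)
      (orthonormal_apply_of_quaternionic I hskew hsq hcomm
        (e := EuclideanSpace.single α₀ 1) (by simp)).innerFamilyCLM_surjective
    refine fun z => Submodule.span_le (p := S.comap (LinearMap.inr ℝ _ _)).2 ?_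
      (hspan ▸ Submodule.mem_top : z ∈ _)
    rintro _ ⟨β, rfl⟩
    have h : VectorField.lieBracket ℝ (X α₀) (X β) q ∈ S :=
      Submodule.subset_span (Or.inr ⟨α₀, β, rfl⟩)
    rw [hXfield, hXfield, lieBracket_heisenbergField hskew] at h
    exact (S.smul_mem_iff (by norm_num)).1 h
  have hhor : ∀ v, (v, (0 : EuclideanSpace ℝ (Fin 3))) ∈ S := by
    refine fun v => Submodule.span_le (p := S.comap (LinearMap.inl ℝ _ _)).2 ?_
      (EuclideanSpace.span_range_single_one ℝ (Fin (4 * n)) ▸ Submodule.mem_top : v ∈ _)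
    rintro _ ⟨β, rfl⟩
    have h := S.sub_mem (Submodule.subset_span (Or.inl ⟨β, rfl⟩)) (hvert (X β q).2)
    rw [hX] at h
    simpa using h
  rw [Submodule.eq_top_iff']
  intro p
  simpa using S.add_mem (hhor p.1) (hvert p.2)
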